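/- For any τ₀ in the subgroup ⟨Θ⟩_{M(G)} of the Miller Machine M(G), there exist words w and ε over X such that ε =_G 1, τ₀ q τ₀⁻¹ =_{M(G)} w⁻¹ q w ε, and ‖w‖ ≤ ‖τ₀‖ (where ‖τ₀‖ is the length of τ₀ in the free group ⟨Θ⟩_{M(G)}). Consequently, τ₀ q⁻¹ τ₀⁻¹ =_{M(G)} (wε)⁻¹ q⁻¹ w for the same w and ε. -/

import Mathlib

/-!
Common setup: a finitely presented group `G = ⟨X ∣ R⟩` (`X` a finite set, `R` a finite
nonempty set of words of the free group `F(X)`) and its Miller machine `M(G)`,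
the group generated by `X ∪ Θ ∪ {q}`, where `Θ = {θ_α : α ∈ X ∪ R}`, subject to
the relations `θ_α x = x θ_α` (`x ∈ X`, `α ∈ X ∪ R`), `θ_x x q = q x θ_x` (`x ∈ X`)
and `θ_r q = q r θ_r` (`r ∈ R`).
-/

namespace Miller

noncomputable section

/-- Index type for the letters `Θ`: one letter `θ_α` for each `α ∈ X ∪ R`
(since `X ∩ R = ∅`, the disjoint sum is faithful). -/
abbrev ThIdx (X : Type) (R : Finset (FreeGroup X)) : Type := X ⊕ {r : FreeGroup X // r ∈ R}

/-- The generators of the Miller machine: the letters of `X`, the letters `Θ`, and `q`. -/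
abbrev Gen (X : Type) (R : Finset (FreeGroup X)) : Type := X ⊕ (ThIdx X R ⊕ Unit)

variable (X : Type) (R : Finset (FreeGroup X))

/-- The letter `x ∈ X`, as a word on the generators of `M(G)`. -/
def xg (x : X) : FreeGroup (Gen X R) := FreeGroup.of (Sum.inl x)

/-- The letter `θ_α`, as a word on the generators of `M(G)`. -/
def θg (a : ThIdx X R) : FreeGroup (Gen X R) := FreeGroup.of (Sum.inr (Sum.inl a))

/-- The letter `q`, as a word on the generators of `M(G)`. -/
def qg : FreeGroup (Gen X R) := FreeGroup.of (Sum.inr (Sum.inr ()))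

/-- A word on `X` is in particular a word on the generators of `M(G)`. -/
def ofX : FreeGroup X →* FreeGroup (Gen X R) := FreeGroup.map Sum.inl

/-- The defining relators of the Miller machine `M(G)`. -/
def rels : Set (FreeGroup (Gen X R)) :=
  {w | (∃ (a : ThIdx X R) (x : X),
          w = θg X R a * xg X R x * (xg X R x * θg X R a)⁻¹) ∨
       (∃ x : X,
          w = θg X R (Sum.inl x) * xg X R x * qg X R *
              (qg X R * xg X R x * θg X R (Sum.inl x))⁻¹) ∨
       (∃ r : {r : FreeGroup X // r ∈ R},
          w = θg X R (Sum.inr r) * qg X R *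
              (qg X R * ofX X R r.1 * θg X R (Sum.inr r))⁻¹)}

/-- The group `G = ⟨X ∣ R⟩`. -/
abbrev G := PresentedGroup (R : Set (FreeGroup X))

/-- The Miller machine `M(G)`. -/
abbrev M := PresentedGroup (rels X R)

/-- The element of `G` represented by a word on `X`. -/
def toG : FreeGroup X →* G X R := PresentedGroup.mk _

/-- The element of `M(G)` represented by a word on the generators. -/
def toM : FreeGroup (Gen X R) →* M X R := PresentedGroup.mk _

/-- The element of `M(G)` represented by a word on `X`. -/
def embX : FreeGroup X →* M X R := (toM X R).comp (ofX X R)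

/-- The element of `M(G)` represented by a word on `Θ`. -/
def embTh : FreeGroup (ThIdx X R) →* M X R :=
  (toM X R).comp (FreeGroup.map fun a => Sum.inr (Sum.inl a))

/-- The generator `x ∈ X` as element of `M(G)`. -/
def xM (x : X) : M X R := toM X R (xg X R x)

/-- The generator `θ_α` as element of `M(G)`. -/
def θM (a : ThIdx X R) : M X R := toM X R (θg X R a)

/-- The generator `q` as element of `M(G)`. -/
def qM : M X R := toM X R (qg X R)

/-- The subgroup `⟨X, q⟩` of `M(G)`. -/
def XqSub : Subgroup (M X R) := Subgroup.closure (Set.range (xM X R) ∪ {qM X R})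

/-- The subgroup `⟨Θ⟩` of `M(G)`. -/
def ThSub : Subgroup (M X R) := Subgroup.closure (Set.range (θM X R))

/-- The subgroup `H = ⟨X ∪ Θ⟩` of `M(G)`. -/
def Hgrp : Subgroup (M X R) := Subgroup.closure (Set.range (xM X R) ∪ Set.range (θM X R))

/-- The subgroup `K₋₁ = ⟨{θ_x x : x ∈ X} ∪ {θ_r : r ∈ R}⟩` of `M(G)`. -/
def Kneg : Subgroup (M X R) := Subgroup.closure
  ((Set.range fun x : X => θM X R (Sum.inl x) * xM X R x) ∪
   (Set.range fun r : {r : FreeGroup X // r ∈ R} => θM X R (Sum.inr r)))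

/-- The subgroup `K₁ = ⟨{θ_x x : x ∈ X} ∪ {θ_r r : r ∈ R}⟩` of `M(G)`. -/
def Kpos : Subgroup (M X R) := Subgroup.closure
  ((Set.range fun x : X => θM X R (Sum.inl x) * xM X R x) ∪
   (Set.range fun r : {r : FreeGroup X // r ∈ R} => θM X R (Sum.inr r) * embX X R r.1))

/-- `‖g‖`: the (reduced) word length of an element of a free group. -/
def wlen {β : Type} (g : FreeGroup β) : ℕ :=
  sInf {n | ∃ l : List (β × Bool), FreeGroup.mk l = g ∧ l.length = n}

/-- `|g|`: word length in `M(G)` with respect to the generating set `X ∪ Θ ∪ {q}`. -/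
def mlen (g : M X R) : ℕ :=
  sInf {n | ∃ w : FreeGroup (Gen X R), toM X R w = g ∧ wlen w = n}

/-- `c(u,v)`: the minimal length of a conjugator taking `u` to `v` in `M(G)`. -/
def c (u v : M X R) : ℕ :=
  sInf {n | ∃ γ : M X R, γ * u * γ⁻¹ = v ∧ mlen X R γ = n}

/-- `c'(u,v)`: the minimal length of a conjugator in `⟨X ∪ Θ⟩` taking `u` to `v`. -/
def c' (u v : M X R) : ℕ :=
  sInf {n | ∃ γ ∈ Hgrp X R, γ * u * γ⁻¹ = v ∧ mlen X R γ = n}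

/-- The product `∏_{i<m} w_i r_i w_i⁻¹`. -/
def prodConj (m : ℕ) (w r : ℕ → FreeGroup X) : FreeGroup X :=
  ((List.range m).map fun i => w i * r i * (w i)⁻¹).prod

/-- `r_0, …, r_{m-1} ∈ R^{±1}`. -/
def IsRelSeq (m : ℕ) (r : ℕ → FreeGroup X) : Prop := ∀ i < m, r i ∈ R ∨ (r i)⁻¹ ∈ R

/-- `δ(g)`: the least `m` such that `g` is freely equal to a product of `m`
conjugates of elements of `R^{±1}`. -/
def area (g : FreeGroup X) : ℕ :=
  sInf {m | ∃ w r : ℕ → FreeGroup X, IsRelSeq X R m r ∧ g = prodConj X m w r}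

/-- The Dehn function `Δ` of the presentation `⟨X ∣ R⟩`. -/
def Dehn (n : ℕ) : ℕ :=
  sSup {d | ∃ g : FreeGroup X, wlen g ≤ n ∧ toG X R g = 1 ∧ area X R g = d}

/-- `f(w) = m + ‖w₁‖ + ‖w_m‖ + ∑_{i=1}^{m-1} ‖w_i⁻¹ w_{i+1}‖` (with `0`-based indexing). -/
def fval (m : ℕ) (w : ℕ → FreeGroup X) : ℕ :=
  m + wlen (w 0) + wlen (w (m - 1)) + ∑ i ∈ Finset.range (m - 1), wlen ((w i)⁻¹ * w (i + 1))

/-- `λ(g)`: the minimum of `f(w)` over expressions `w = ∏ w_i r_i w_i⁻¹` freely equal to `g`. -/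
def lam (g : FreeGroup X) : ℕ :=
  sInf {n | ∃ (m : ℕ) (w r : ℕ → FreeGroup X),
    1 ≤ m ∧ IsRelSeq X R m r ∧ g = prodConj X m w r ∧ fval X m w = n}

/-- `Λ(n)`: the maximum of `λ(g)` over words `g` with `g =_G 1` and `‖g‖ ≤ n`. -/
def Lam (n : ℕ) : ℕ :=
  sSup {d | ∃ g : FreeGroup X, wlen g ≤ n ∧ toG X R g = 1 ∧ lam X R g = d}

/-- `t = max({‖r‖ : r ∈ R} ∪ {2})`. -/
def t : ℕ := max (R.sup fun r => wlen r) 2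

/-- `w, ε` witness the iso-computational list conjugacy `u ∼^σ v` (indices `0,…,k-1`,
with the convention that the index after `k-1` is `0`, i.e. `σ_{k+1} = σ₁`). -/
def IsICLCWitness (k : ℕ) (σ : ℕ → ℤ) (u v : ℕ → FreeGroup X) (w ε : FreeGroup X) : Prop :=
  toG X R ε = 1 ∧ ∀ i < k,
    (σ i = 1 ∧ σ ((i + 1) % k) = 1 → w * ε * u i * w⁻¹ = v i) ∧
    (σ i = 1 ∧ σ ((i + 1) % k) = -1 → w * ε * u i * ε⁻¹ * w⁻¹ = v i) ∧
    (σ i = -1 ∧ σ ((i + 1) % k) = 1 → w * u i * w⁻¹ = v i) ∧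
    (σ i = -1 ∧ σ ((i + 1) % k) = -1 → w * u i * ε⁻¹ * w⁻¹ = v i)

/-- Iso-computational list conjugacy `u ∼^σ v`. -/
def ICLC (k : ℕ) (σ : ℕ → ℤ) (u v : ℕ → FreeGroup X) : Prop :=
  ∃ w ε : FreeGroup X, IsICLCWitness X R k σ u v w ε

/-- `c_{k,σ}(u,v)`: the least `‖w‖` over witnessing pairs `(w, ε)` for `u ∼^σ v`. -/
def cList (k : ℕ) (σ : ℕ → ℤ) (u v : ℕ → FreeGroup X) : ℕ :=
  sInf {n | ∃ w ε : FreeGroup X, IsICLCWitness X R k σ u v w ε ∧ wlen w = n}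

/-- `C_{k,σ}(n)`. -/
def CC (k : ℕ) (σ : ℕ → ℤ) (n : ℕ) : ℕ :=
  sSup {d | ∃ u v : ℕ → FreeGroup X, ICLC X R k σ u v ∧
    (∑ i ∈ Finset.range k, (wlen (u i) + wlen (v i))) ≤ n - 2 * k ∧
    cList X R k σ u v = d}

/-- The alphabet `X ∪ {q}`. -/
abbrev Yt (X : Type) : Type := X ⊕ Unit

/-- The letter `q` in the free group `F(X ∪ {q})`. -/
def qY : FreeGroup (Yt X) := FreeGroup.of (Sum.inr ())

/-- A word on `X` as a word on `X ∪ {q}`. -/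
def embY : FreeGroup X →* FreeGroup (Yt X) := FreeGroup.map Sum.inl

/-- The element of `M(G)` represented by a word on `X ∪ {q}`. -/
def toMY : FreeGroup (Yt X) →* M X R :=
  (toM X R).comp (FreeGroup.map (Sum.elim Sum.inl fun u => Sum.inr (Sum.inr u)))

/-- The word `q^{σ₁}u₁q^{σ₂}u₂⋯q^{σ_k}u_k` on `X ∪ {q}` (`0`-based indexing). -/
def qword (k : ℕ) (σ : ℕ → ℤ) (u : ℕ → FreeGroup X) : FreeGroup (Yt X) :=
  ((List.range k).map fun i => qY X ^ σ i * embY X (u i)).prod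

/-- The word `q^{σ₁}u₁q^{σ₂}u₂⋯q^{σ_k}u_k` is (freely) reduced, expressed as:
its reduced length equals the sum of the lengths of its letters. -/
def ReducedForm (k : ℕ) (σ : ℕ → ℤ) (u : ℕ → FreeGroup X) : Prop :=
  wlen (qword X k σ u) = k + ∑ i ∈ Finset.range k, wlen (u i)

/-- The element `q^{σ₁}u₁q^{σ₂}u₂⋯q^{σ_k}u_k` of `M(G)`. -/
def qwordM (k : ℕ) (σ : ℕ → ℤ) (u : ℕ → FreeGroup X) : M X R :=
  toMY X R (qword X k σ u)

/-- `σ` is a tuple of signs `±1`. -/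
def IsSgn (k : ℕ) (σ : ℕ → ℤ) : Prop := ∀ i < k, σ i = 1 ∨ σ i = -1

/-- `D_{k,σ}(n)`: restriction of the conjugator length function of `M(G)` to conjugate
pairs `x = q^{σ₁}u₁⋯q^{σ_k}u_k`, `y = q^{σ₁}v₁⋯q^{σ_k}v_k` that are reduced words with
`∑ (‖u_i‖ + ‖v_i‖) ≤ n - 2k`. -/
def Dk (k : ℕ) (σ : ℕ → ℤ) (n : ℕ) : ℕ :=
  sSup {d | ∃ u v : ℕ → FreeGroup X,
    ReducedForm X k σ u ∧ ReducedForm X k σ v ∧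
    IsConj (qwordM X R k σ u) (qwordM X R k σ v) ∧
    (∑ i ∈ Finset.range k, (wlen (u i) + wlen (v i))) ≤ n - 2 * k ∧
    c X R (qwordM X R k σ u) (qwordM X R k σ v) = d}

/-- `D'_{k,σ}(n)`: as `D_{k,σ}(n)`, but for pairs conjugate via an element of `⟨X ∪ Θ⟩`
and with minimal conjugator length measured over conjugators in `⟨X ∪ Θ⟩`. -/
def Dk' (k : ℕ) (σ : ℕ → ℤ) (n : ℕ) : ℕ :=
  sSup {d | ∃ u v : ℕ → FreeGroup X,
    ReducedForm X k σ u ∧ ReducedForm X k σ v ∧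
    (∃ γ ∈ Hgrp X R, γ * qwordM X R k σ u * γ⁻¹ = qwordM X R k σ v) ∧
    (∑ i ∈ Finset.range k, (wlen (u i) + wlen (v i))) ≤ n - 2 * k ∧
    c' X R (qwordM X R k σ u) (qwordM X R k σ v) = d}

/-- `D₀(n)`: restriction of the conjugator length function of `M(G)` to pairs
`(qu, q)` with `u` a word on `X`, `qu` conjugate to `q`, and `‖u‖ ≤ n - 2`. -/
def D0 (n : ℕ) : ℕ :=
  sSup {d | ∃ u : FreeGroup X, wlen u ≤ n - 2 ∧
    IsConj (qM X R * embX X R u) (qM X R) ∧ c X R (qM X R * embX X R u) (qM X R) = d}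

/-- `D'₀(n)`: as `D₀(n)`, via conjugators in `⟨X ∪ Θ⟩`. -/
def D0' (n : ℕ) : ℕ :=
  sSup {d | ∃ u : FreeGroup X, wlen u ≤ n - 2 ∧
    (∃ γ ∈ Hgrp X R, γ * (qM X R * embX X R u) * γ⁻¹ = qM X R) ∧
    c' X R (qM X R * embX X R u) (qM X R) = d}

/-- The endomorphism `φ_α` of `F(X ∪ {q})`: it fixes each `x ∈ X` and sends `q` to
`α⁻¹qα` if `α ∈ X` and to `qα` if `α ∈ R`. -/
def phi (a : ThIdx X R) : FreeGroup (Yt X) →* FreeGroup (Yt X) :=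
  FreeGroup.lift fun s =>
    match s with
    | Sum.inl x => FreeGroup.of (Sum.inl x : Yt X)
    | Sum.inr _ =>
      match a with
      | Sum.inl x' => (FreeGroup.of (Sum.inl x' : Yt X))⁻¹ * qY X * FreeGroup.of (Sum.inl x')
      | Sum.inr r => qY X * embY X r.1

end

end Miller

/-!
Each letter `θ_α` commutes with the words on `X` and conjugates `q` into the form
`a⁻¹ q a b` with `‖a‖ ≤ 1` and `b =_G 1`: `θ_x q θ_x⁻¹ = x⁻¹ q x` and `θ_r q θ_r⁻¹ = q r`;
the same holds for `θ_α⁻¹`, with `a⁻¹` and `a b⁻¹ a⁻¹`. Conjugating `w⁻¹ q w ε` by such a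
letter therefore gives `(a w)⁻¹ q (a w) (w⁻¹ b w ε)`, so along a word `τ₀` in `Θ` the length
of `w` grows by at most one per letter while `ε` stays trivial in `G`.
-/

namespace Miller

section Twisting

variable {M F : Type*} [Group M] [Group F] (f : F →* M) {θ q : M} {a b : F}

theorem conj_twisted_eq (hθ : ∀ u, Commute θ (f u))
    (hq : θ * q * θ⁻¹ = (f a)⁻¹ * q * f a * f b) (w ε : F) :
    θ * ((f w)⁻¹ * q * f w * f ε) * θ⁻¹ =
      (f (a * w))⁻¹ * q * f (a * w) * f (w⁻¹ * b * w * ε) := by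
  have hfix : ∀ u, θ * f u * θ⁻¹ = f u := fun u => by rw [(hθ u).eq, mul_inv_cancel_right]
  calc θ * ((f w)⁻¹ * q * f w * f ε) * θ⁻¹
      = (θ * f w⁻¹ * θ⁻¹) * (θ * q * θ⁻¹) * (θ * f (w * ε) * θ⁻¹) := by
        simp only [map_mul, map_inv]; group
    _ = (f (a * w))⁻¹ * q * f (a * w) * f (w⁻¹ * b * w * ε) := by
        rw [hfix, hfix, hq]; simp only [map_mul, map_inv]; group

theorem inv_conj_eq_of_conj_eq (hθ : ∀ u, Commute θ (f u))
    (hq : θ * q * θ⁻¹ = (f a)⁻¹ * q * f a * f b) :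
    θ⁻¹ * q * θ⁻¹⁻¹ = (f a⁻¹)⁻¹ * q * f a⁻¹ * f (a * b⁻¹ * a⁻¹) := by
  have hfix : ∀ u, θ⁻¹ * f u * θ = f u := fun u => by
    rw [((hθ u).inv_left).eq, mul_assoc, inv_mul_cancel, mul_one]
  have key : q = (f a)⁻¹ * (θ⁻¹ * q * θ) * (f a * f b) :=
    calc q = θ⁻¹ * (θ * q * θ⁻¹) * θ := by group
      _ = (θ⁻¹ * f a⁻¹ * θ) * (θ⁻¹ * q * θ) * (θ⁻¹ * f (a * b) * θ) := by
        rw [hq]; simp only [map_mul, map_inv]; group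
      _ = (f a)⁻¹ * (θ⁻¹ * q * θ) * (f a * f b) := by rw [hfix, hfix, map_inv, map_mul]
  calc θ⁻¹ * q * θ⁻¹⁻¹
      = f a * ((f a)⁻¹ * (θ⁻¹ * q * θ) * (f a * f b)) * (f a * f b)⁻¹ := by group
    _ = (f a⁻¹)⁻¹ * q * f a⁻¹ * f (a * b⁻¹ * a⁻¹) := by
        rw [← key]; simp only [map_mul, map_inv]; group

end Twisting

section WordLength

variable {β : Type}

theorem wlen_eq_norm [DecidableEq β] (g : FreeGroup β) : wlen g = g.norm :=
  le_antisymm (Nat.sInf_le ⟨g.toWord, FreeGroup.mk_toWord, rfl⟩)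
    (le_csInf ⟨_, g.toWord, FreeGroup.mk_toWord, rfl⟩ fun _ ⟨_, hl, hn⟩ =>
      hn ▸ hl ▸ FreeGroup.norm_mk_le)

theorem wlen_one : wlen (1 : FreeGroup β) = 0 := by
  classical
  rw [wlen_eq_norm, FreeGroup.norm_one]

theorem wlen_of (x : β) : wlen (FreeGroup.of x) = 1 := by
  classical
  rw [wlen_eq_norm, FreeGroup.norm_of]

theorem wlen_inv (g : FreeGroup β) : wlen g⁻¹ = wlen g := by
  classical
  rw [wlen_eq_norm, wlen_eq_norm, FreeGroup.norm_inv_eq]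

theorem wlen_mul_le (g h : FreeGroup β) : wlen (g * h) ≤ wlen g + wlen h := by
  classical
  simpa only [wlen_eq_norm] using FreeGroup.norm_mul_le g h

end WordLength

section Machine

variable {X : Type} {R : Finset (FreeGroup X)}

theorem θM_mul_xM (α : ThIdx X R) (x : X) : θM X R α * xM X R x = xM X R x * θM X R α := by
  simpa only [θM, xM, toM, map_mul] using
    PresentedGroup.mk_eq_mk_of_mul_inv_mem (rels := rels X R) (Or.inl ⟨α, x, rfl⟩)

theorem θM_mul_xM_mul_qM (x : X) :
    θM X R (.inl x) * xM X R x * qM X R = qM X R * xM X R x * θM X R (.inl x) := by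
  simpa only [θM, xM, qM, toM, map_mul] using
    PresentedGroup.mk_eq_mk_of_mul_inv_mem (rels := rels X R) (Or.inr (Or.inl ⟨x, rfl⟩))

theorem θM_mul_qM (r : {r : FreeGroup X // r ∈ R}) :
    θM X R (.inr r) * qM X R = qM X R * embX X R r.1 * θM X R (.inr r) := by
  simpa only [θM, qM, embX, toM, MonoidHom.comp_apply, map_mul] using
    PresentedGroup.mk_eq_mk_of_mul_inv_mem (rels := rels X R) (Or.inr (Or.inr ⟨r, rfl⟩))

theorem embX_of (x : X) : embX X R (FreeGroup.of x) = xM X R x := rfl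

theorem commute_θM_embX (α : ThIdx X R) (u : FreeGroup X) : Commute (θM X R α) (embX X R u) := by
  induction u using FreeGroup.induction_on with
  | C1 => rw [map_one]; exact Commute.one_right _
  | of x => exact θM_mul_xM α x
  | inv_of x ih => rw [map_inv]; exact ih.inv_right
  | mul u v ihu ihv => rw [map_mul]; exact ihu.mul_right ihv

def ShiftsQ (θ : M X R) : Prop :=
  (∀ u, Commute θ (embX X R u)) ∧ ∃ a b : FreeGroup X, wlen a ≤ 1 ∧ toG X R b = 1 ∧
    θ * qM X R * θ⁻¹ = (embX X R a)⁻¹ * qM X R * embX X R a * embX X R b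

theorem shiftsQ_θM (α : ThIdx X R) : ShiftsQ (θM X R α) := by
  refine ⟨commute_θM_embX α, ?_⟩
  rcases α with x | r
  · refine ⟨.of x, 1, (wlen_of x).le, map_one _, ?_⟩
    have hc := θM_mul_xM (R := R) (.inl x) x
    have hq := θM_mul_xM_mul_qM (R := R) x
    rw [map_one, mul_one, embX_of]
    calc θM X R (.inl x) * qM X R * (θM X R (.inl x))⁻¹
        = (xM X R x)⁻¹ * (xM X R x * θM X R (.inl x)) * qM X R * (θM X R (.inl x))⁻¹ := by
          group
      _ = (xM X R x)⁻¹ * (θM X R (.inl x) * xM X R x * qM X R) * (θM X R (.inl x))⁻¹ := by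
          rw [← hc]; group
      _ = (xM X R x)⁻¹ * qM X R * xM X R x := by rw [hq]; group
  · refine ⟨1, r.1, wlen_one.trans_le zero_le_one, PresentedGroup.one_of_mem r.2, ?_⟩
    rw [θM_mul_qM]
    simp only [map_one, inv_one, one_mul, mul_one, mul_inv_cancel_right]

theorem ShiftsQ.inv {θ : M X R} (h : ShiftsQ θ) : ShiftsQ θ⁻¹ := by
  obtain ⟨hθ, a, b, ha, hb, hq⟩ := h
  refine ⟨fun u => (hθ u).inv_left, a⁻¹, a * b⁻¹ * a⁻¹, (wlen_inv a).trans_le ha, ?_,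
    inv_conj_eq_of_conj_eq _ hθ hq⟩
  simp only [map_mul, map_inv, hb, inv_one, mul_one, mul_inv_cancel]

theorem shiftsQ_embTh_mk_singleton (α : ThIdx X R) (s : Bool) :
    ShiftsQ (embTh X R (FreeGroup.mk [(α, s)])) := by
  cases s
  · have : FreeGroup.mk [(α, false)] = (FreeGroup.of α)⁻¹ := by
      simp [FreeGroup.of, FreeGroup.inv_mk, FreeGroup.invRev]
    rw [this, map_inv]
    exact (shiftsQ_θM α).inv
  · exact shiftsQ_θM α

def IsTwistedQ (n : ℕ) (g : M X R) : Prop :=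
  ∃ w ε : FreeGroup X, toG X R ε = 1 ∧ wlen w ≤ n ∧
    g = (embX X R w)⁻¹ * qM X R * embX X R w * embX X R ε

theorem isTwistedQ_qM : IsTwistedQ 0 (qM X R) :=
  ⟨1, 1, map_one _, wlen_one.le, by simp only [map_one, inv_one, one_mul, mul_one]⟩

theorem IsTwistedQ.conj {n : ℕ} {g θ : M X R} (hg : IsTwistedQ n g) (hθ : ShiftsQ θ) :
    IsTwistedQ (n + 1) (θ * g * θ⁻¹) := by
  obtain ⟨w, ε, hε, hw, rfl⟩ := hg
  obtain ⟨hcomm, a, b, ha, hb, hq⟩ := hθ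
  refine ⟨a * w, w⁻¹ * b * w * ε, ?_, (wlen_mul_le a w).trans (by omega),
    conj_twisted_eq _ hcomm hq w ε⟩
  simp only [map_mul, map_inv, hb, hε, mul_one, inv_mul_cancel]

theorem isTwistedQ_embTh_mk_conj (l : List (ThIdx X R × Bool)) :
    IsTwistedQ l.length
      (embTh X R (FreeGroup.mk l) * qM X R * (embTh X R (FreeGroup.mk l))⁻¹) := by
  induction l with
  | nil => simpa [← FreeGroup.one_eq_mk] using isTwistedQ_qM
  | cons p l ih =>
    have hmk : FreeGroup.mk (p :: l) = FreeGroup.mk [p] * FreeGroup.mk l :=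
      (FreeGroup.mul_mk (L₁ := [p]) (L₂ := l)).symm
    have := ih.conj (shiftsQ_embTh_mk_singleton p.1 p.2)
    rw [List.length_cons, hmk, map_mul]
    simpa only [mul_inv_rev, mul_assoc] using this

end Machine

end Miller

open Miller in
theorem statement8_general (X : Type) (R : Finset (FreeGroup X))
    (τ₀ : FreeGroup (ThIdx X R)) :
    ∃ w ε : FreeGroup X, toG X R ε = 1 ∧
      embTh X R τ₀ * qM X R * (embTh X R τ₀)⁻¹ =
        (embX X R w)⁻¹ * qM X R * embX X R w * embX X R ε ∧
      wlen w ≤ wlen τ₀ ∧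
      embTh X R τ₀ * (qM X R)⁻¹ * (embTh X R τ₀)⁻¹ =
        (embX X R (w * ε))⁻¹ * (qM X R)⁻¹ * embX X R w := by
  classical
  obtain ⟨w, ε, hε, hw, hconj⟩ := isTwistedQ_embTh_mk_conj τ₀.toWord
  rw [FreeGroup.mk_toWord] at hconj
  refine ⟨w, ε, hε, hconj, by rwa [wlen_eq_norm τ₀], ?_⟩
  calc embTh X R τ₀ * (qM X R)⁻¹ * (embTh X R τ₀)⁻¹
      = (embTh X R τ₀ * qM X R * (embTh X R τ₀)⁻¹)⁻¹ := by group
    _ = (embX X R (w * ε))⁻¹ * (qM X R)⁻¹ * embX X R w := by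
      rw [hconj, map_mul]; group

open Miller in
/-- For any `τ₀` in the subgroup `⟨Θ⟩` of `M(G)` (a word in the letters
`Θ`, on which `⟨Θ⟩` is free), there exist words `w` and `ε` over `X` such that `ε =_G 1`,
`τ₀ q τ₀⁻¹ =_{M(G)} w⁻¹ q w ε`, and `‖w‖ ≤ ‖τ₀‖. Consequently
`τ₀ q⁻¹ τ₀⁻¹ =_{M(G)} (wε)⁻¹ q⁻¹ w` for the same `w` and `ε`. -/
theorem statement8 (X : Type) [Fintype X] (R : Finset (FreeGroup X)) (hR : R.Nonempty)
    (τ₀ : FreeGroup (ThIdx X R)) :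
    ∃ w ε : FreeGroup X, toG X R ε = 1 ∧
      embTh X R τ₀ * qM X R * (embTh X R τ₀)⁻¹ =
        (embX X R w)⁻¹ * qM X R * embX X R w * embX X R ε ∧
      wlen w ≤ wlen τ₀ ∧
      embTh X R τ₀ * (qM X R)⁻¹ * (embTh X R τ₀)⁻¹ =
        (embX X R (w * ε))⁻¹ * (qM X R)⁻¹ * embX X R w :=
  statement8_general X R τ₀
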